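/- arXiv:2207.03049 — 7 statements merged into one kernel-verified Lean document; each statement's English description precedes it below -/
import Mathlib

section
/- Approval voting is immune to destructive control by partition of candidates with the ties-promote rule in the nonunique-winner model: if p is a winner of approval election (C,V), then for every partition (C₁,C₂) of C with C₁ ∪ C₂ = C and C₁ ∩ C₂ = ∅, p is a winner of the final-round approval election whose candidate set is W(C₁) ∪ W(C₂) and whose votes are V restricted to that set, where W(Cᵢ) denotes the set of all winners of the approval subelection (Cᵢ,V). -/
open Classical

/-- Number of votes in `V` approving candidate `c`. -/
def appCount {α : Type*} (V : List (α → Bool)) (c : α) : ℕ :=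
  (V.filter (fun v => v c)).length

/-- Winner set of the approval election on candidate set `C` with votes `V`
(approval counts are invariant under restricting votes to `C`).  The winner set
of the empty candidate set is empty. -/
noncomputable def appWinners {α : Type*} (C : Finset α) (V : List (α → Bool)) : Finset α :=
  C.filter (fun c => ∀ d ∈ C, appCount V d ≤ appCount V c)

/-! Approval counts do not depend on the candidate set, so a winner of an election stays a
winner of every subelection containing it. Hence `p` wins its half of the partition, reaches
the final round, and wins there, since the final candidates all come from `C`. -/

section

variable {α : Type*} {C D : Finset α} {V : List (α → Bool)} {p : α}

theorem mem_appWinners :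
    p ∈ appWinners C V ↔ p ∈ C ∧ ∀ d ∈ C, appCount V d ≤ appCount V p :=
  Finset.mem_filter

theorem appWinners_subset : appWinners C V ⊆ C :=
  Finset.filter_subset _ _

theorem mem_appWinners_of_subset (hp : p ∈ appWinners C V) (hpD : p ∈ D) (hDC : D ⊆ C) :
    p ∈ appWinners D V :=
  mem_appWinners.2 ⟨hpD, fun d hd => (mem_appWinners.1 hp).2 d (hDC hd)⟩

end

theorem approval_immune_dc_pc_tp_nuw_general {α : Type*} (C C₁ C₂ : Finset α)
    (V : List (α → Bool)) (p : α)
    (hwin : p ∈ appWinners C V)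
    (hcup : C₁ ∪ C₂ = C) :
    p ∈ appWinners (appWinners C₁ V ∪ appWinners C₂ V) V := by
  subst hcup
  have hfinal_subset : appWinners C₁ V ∪ appWinners C₂ V ⊆ C₁ ∪ C₂ :=
    Finset.union_subset_union appWinners_subset appWinners_subset
  have hfinalist : p ∈ appWinners C₁ V ∪ appWinners C₂ V := by
    rcases Finset.mem_union.1 (appWinners_subset hwin) with hp₁ | hp₂
    · exact Finset.mem_union_left _
        (mem_appWinners_of_subset hwin hp₁ Finset.subset_union_left)
    · exact Finset.mem_union_right _
        (mem_appWinners_of_subset hwin hp₂ Finset.subset_union_right)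
  exact mem_appWinners_of_subset hwin hfinalist hfinal_subset

/-- approval is immune to DC-PC-TP-NUW.  If `p` wins `(C,V)`, then for
every partition `(C₁, C₂)` of `C`, `p` wins the final-round approval election on
`W(C₁) ∪ W(C₂)`. -/
theorem approval_immune_dc_pc_tp_nuw {α : Type*} (C C₁ C₂ : Finset α)
    (V : List (α → Bool)) (p : α)
    (hwin : p ∈ appWinners C V)
    (hcup : C₁ ∪ C₂ = C) (hdisj : C₁ ∩ C₂ = ∅) :
    p ∈ appWinners (appWinners C₁ V ∪ appWinners C₂ V) V :=
  approval_immune_dc_pc_tp_nuw_general C C₁ C₂ V p hwin hcup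
end

section
/- Approval voting is immune to destructive control by partition of candidates with the ties-eliminate rule in the unique-winner model: if p is the unique winner of approval election (C,V), then for every partition (C₁,C₂) of C, with U(Cᵢ) denoting the unique winner of subelection (Cᵢ,V) if one exists (and the empty set otherwise), p is the unique winner of the final-round approval election on candidate set U(C₁) ∪ C₂ when p ∈ C₁ implies p ∈ U(C₁), and in all cases p ends up the unique winner of the two-stage election (i.e., if p ∈ C₁ then p uniquely wins (C₁,V) and then uniquely wins (U(C₁) ∪ C₂, V); if p ∈ C₂ then p uniquely wins (U(C₁) ∪ C₂, V)). -/
open Classical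

/-- Ties-eliminate survivor set: the unique winner of `(C,V)` if there is exactly
one winner, and the empty set otherwise. -/
noncomputable def appUW {α : Type*} (C : Finset α) (V : List (α → Bool)) : Finset α :=
  if (appWinners C V).card = 1 then appWinners C V else ∅

/-!
A unique approval winner `p` of `(C,V)` strictly out-scores every other candidate of `C`, and
approval scores do not depend on which other candidates are present, so `p` stays the unique
winner of every subelection containing it. Both `C₁` and the final-round candidate set
`U(C₁) ∪ C₂` are such subelections whenever they contain `p`.
-/

namespace Approval

open Finset

variable {α : Type*} {C S : Finset α} {V : List (α → Bool)} {p : α}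

lemma mem_appWinners {c : α} :
    c ∈ appWinners C V ↔ c ∈ C ∧ ∀ d ∈ C, appCount V d ≤ appCount V c := by
  simp [appWinners]

lemma appWinners_eq_singleton_iff :
    appWinners C V = {p} ↔ p ∈ C ∧ ∀ d ∈ C, d ≠ p → appCount V d < appCount V p := by
  constructor
  · intro huw
    obtain ⟨hpC, hpmax⟩ := mem_appWinners.mp (huw ▸ mem_singleton_self p)
    refine ⟨hpC, fun d hdC hdp => (hpmax d hdC).lt_of_ne fun htie => hdp ?_⟩
    have hd : d ∈ appWinners C V :=
      mem_appWinners.mpr ⟨hdC, fun e heC => htie ▸ hpmax e heC⟩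
    simpa [huw] using hd
  · rintro ⟨hpC, hlead⟩
    ext q
    rw [mem_appWinners, mem_singleton]
    constructor
    · rintro ⟨hqC, hqmax⟩
      by_contra hqp
      exact (hqmax p hpC).not_gt (hlead q hqC hqp)
    · rintro rfl
      exact ⟨hpC, fun d hdC => if hdp : d = q then hdp ▸ le_rfl else (hlead d hdC hdp).le⟩

lemma appWinners_eq_singleton_of_subset (huw : appWinners C V = {p}) (hSC : S ⊆ C)
    (hpS : p ∈ S) : appWinners S V = {p} :=
  appWinners_eq_singleton_iff.mpr
    ⟨hpS, fun d hdS => (appWinners_eq_singleton_iff.mp huw).2 d (hSC hdS)⟩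

lemma appUW_subset : appUW C V ⊆ C := by
  unfold appUW
  split_ifs
  · exact filter_subset _ _
  · exact empty_subset _

lemma appUW_eq_of_appWinners_eq_singleton (huw : appWinners C V = {p}) : appUW C V = {p} := by
  simp [appUW, huw]

end Approval

open Approval Finset in
theorem approval_immune_dc_pc_te_uw_general {α : Type*} (C C₁ C₂ : Finset α)
    (V : List (α → Bool)) (p : α)
    (huw : appWinners C V = {p})
    (hcup : C₁ ∪ C₂ = C) :
    (p ∈ C₁ → appWinners C₁ V = {p} ∧ p ∈ appUW C₁ V ∧
        appWinners (appUW C₁ V ∪ C₂) V = {p}) ∧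
    (p ∈ C₂ → appWinners (appUW C₁ V ∪ C₂) V = {p}) := by
  have hC₁ : C₁ ⊆ C := hcup ▸ subset_union_left
  have hfinal : appUW C₁ V ∪ C₂ ⊆ C :=
    hcup ▸ union_subset_union_left appUW_subset
  refine ⟨fun hp₁ => ?_, fun hp₂ =>
    appWinners_eq_singleton_of_subset huw hfinal (mem_union_right _ hp₂)⟩
  have hw₁ : appWinners C₁ V = {p} := appWinners_eq_singleton_of_subset huw hC₁ hp₁
  have hU : appUW C₁ V = {p} := appUW_eq_of_appWinners_eq_singleton hw₁
  exact ⟨hw₁, hU ▸ mem_singleton_self p,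
    appWinners_eq_singleton_of_subset huw hfinal (by simp [hU])⟩

/-- approval is immune to DC-PC-TE-UW.  If `p` is the unique winner of
`(C,V)` (winner set exactly `{p}`), then for every partition `(C₁,C₂)` of `C`:
if `p ∈ C₁` then `p` uniquely wins `(C₁,V)` (so proceeds, i.e. `p ∈ U(C₁)`) and
uniquely wins the final round `(U(C₁) ∪ C₂, V)`; and if `p ∈ C₂` then `p`
uniquely wins the final round `(U(C₁) ∪ C₂, V)`. -/
theorem approval_immune_dc_pc_te_uw {α : Type*} (C C₁ C₂ : Finset α)
    (V : List (α → Bool)) (p : α)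
    (huw : appWinners C V = {p})
    (hcup : C₁ ∪ C₂ = C) (hdisj : C₁ ∩ C₂ = ∅) :
    (p ∈ C₁ → appWinners C₁ V = {p} ∧ p ∈ appUW C₁ V ∧
        appWinners (appUW C₁ V ∪ C₂) V = {p}) ∧
    (p ∈ C₂ → appWinners (appUW C₁ V ∪ C₂) V = {p}) :=
  approval_immune_dc_pc_te_uw_general C C₁ C₂ V p huw hcup
end

section
/- In approval voting, if on input (C,V,p) with p ∈ C it is the case that p does not achieve the maximal approval count Y and exactly one candidate achieves Y, then no partition (C₁,C₂) of C makes p a winner of the two-stage RPC-TE election; i.e., p is not in Approval-CC-RPC-TE-NUW in this case. -/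
open Classical

theorem appWinners_eq_singleton {α : Type*} {S : Finset α} {V : List (α → Bool)} {w : α}
    (hwS : w ∈ S) (hlt : ∀ c ∈ S, c ≠ w → appCount V c < appCount V w) :
    appWinners S V = {w} := by
  ext c
  simp only [appWinners, Finset.mem_filter, Finset.mem_singleton]
  constructor
  · rintro ⟨hcS, hc⟩
    by_contra hcw
    exact (hlt c hcS hcw).not_ge (hc w hwS)
  · rintro rfl
    refine ⟨hwS, fun d hd => ?_⟩
    rcases eq_or_ne d c with rfl | hdc
    · exact le_rfl
    · exact (hlt d hd hdc).le

theorem appUW_eq_singleton {α : Type*} {S : Finset α} {V : List (α → Bool)} {w : α}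
    (hwS : w ∈ S) (hlt : ∀ c ∈ S, c ≠ w → appCount V c < appCount V w) :
    appUW S V = {w} := by
  simp [appUW, appWinners_eq_singleton hwS hlt]

theorem mem_appUW_union {α : Type*} {C₁ C₂ : Finset α} {V : List (α → Bool)} {w : α}
    (hw : w ∈ C₁ ∪ C₂) (hlt : ∀ c ∈ C₁ ∪ C₂, c ≠ w → appCount V c < appCount V w) :
    w ∈ appUW C₁ V ∪ appUW C₂ V := by
  rcases Finset.mem_union.mp hw with h | h
  · rw [appUW_eq_singleton h fun c hc => hlt c (Finset.mem_union_left _ hc)]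
    exact Finset.mem_union_left _ (Finset.mem_singleton_self w)
  · rw [appUW_eq_singleton h fun c hc => hlt c (Finset.mem_union_right _ hc)]
    exact Finset.mem_union_right _ (Finset.mem_singleton_self w)

theorem notMem_appWinners_of_lt {α : Type*} {S : Finset α} {V : List (α → Bool)} {p w : α}
    (hwS : w ∈ S) (hlt : appCount V p < appCount V w) : p ∉ appWinners S V := fun hp =>
  hlt.not_ge ((Finset.mem_filter.mp hp).2 w hwS)

/-- if `p` does not achieve the maximal approval count `Y` and exactly
one candidate achieves `Y`, then no partition `(C₁,C₂)` of `C` makes `p` a winner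
of the two-stage RPC-TE approval election. -/
theorem approval_cc_rpc_te_nuw_no_solution {α : Type*}
    (C : Finset α) (V : List (α → Bool)) (p : α) (hp : p ∈ C)
    (hw : ∃ w ∈ C, w ≠ p ∧ (∀ c ∈ C, appCount V c ≤ appCount V w) ∧
      (∀ c ∈ C, appCount V c = appCount V w → c = w)) :
    ∀ C₁ C₂ : Finset α, C₁ ∪ C₂ = C → C₁ ∩ C₂ = ∅ →
      p ∉ appWinners (appUW C₁ V ∪ appUW C₂ V) V := by
  obtain ⟨w, hwC, hwp, hmax, huniq⟩ := hw
  have hlt : ∀ c ∈ C, c ≠ w → appCount V c < appCount V w := fun c hc hcw =>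
    (hmax c hc).lt_of_ne fun h => hcw (huniq c hc h)
  intro C₁ C₂ hU _
  subst hU
  exact notMem_appWinners_of_lt (mem_appUW_union hwC hlt) (hlt p hp hwp.symm)
end

section
/- For any election system E (a function mapping a pair (candidate set, vote list) to a subset of the candidate set), the decision problems E-DC-RPC-TP-NUW and E-DC-PC-TP-NUW are equal as sets: for every (C,V,p) with p ∈ C, there exists a partition (C₁,C₂) of C under which p is not a winner of the two-stage RPC-TP election if and only if there exists a partition (C₁,C₂) under which p is not a winner of the two-stage PC-TP election. -/
/-!
Both attacks succeed exactly when `p` loses the election on some `D ⊆ C` containing it. Given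
such a `D`, the partition `(D, C \ D)` works for both variants: `p` is eliminated in round one
and `C \ D` does not contain it, so `p` is not even a candidate of the final round. Conversely,
in either variant `p` either reaches the final round and loses it, or loses the subelection of
its own part.
-/

namespace DestructiveControl

open Finset

variable {α : Type*} [DecidableEq α] {E : Finset α → Finset α} {C C₁ C₂ D : Finset α} {p : α}

def LosesSubelection (E : Finset α → Finset α) (C : Finset α) (p : α) : Prop :=
  ∃ D ⊆ C, p ∈ D ∧ p ∉ E D

theorem notMem_union_sdiff (hpD : p ∈ D) (hpED : p ∉ E D) : p ∉ E D ∪ (C \ D) := by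
  rw [mem_union, mem_sdiff, not_or, not_and_not_right]
  exact ⟨hpED, fun _ => hpD⟩

section

variable (hE : ∀ C' : Finset α, E C' ⊆ C')
include hE

theorem losesSubelection_of_runoffPartition (hp : p ∈ C₁ ∪ C₂) (h : p ∉ E (E C₁ ∪ E C₂)) :
    LosesSubelection E (C₁ ∪ C₂) p := by
  by_cases hfinal : p ∈ E C₁ ∪ E C₂
  · exact ⟨_, union_subset_union (hE C₁) (hE C₂), hfinal, h⟩
  · rw [mem_union, not_or] at hfinal
    rcases mem_union.mp hp with hp₁ | hp₂
    · exact ⟨C₁, subset_union_left, hp₁, hfinal.1⟩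
    · exact ⟨C₂, subset_union_right, hp₂, hfinal.2⟩

theorem losesSubelection_of_partition (hp : p ∈ C₁ ∪ C₂) (h : p ∉ E (E C₁ ∪ C₂)) :
    LosesSubelection E (C₁ ∪ C₂) p := by
  by_cases hfinal : p ∈ E C₁ ∪ C₂
  · exact ⟨_, union_subset_union (hE C₁) subset_rfl, hfinal, h⟩
  · rw [mem_union, not_or] at hfinal
    exact ⟨C₁, subset_union_left, (mem_union.mp hp).resolve_right hfinal.2, hfinal.1⟩

theorem exists_runoffPartition_iff_losesSubelection (hp : p ∈ C) :
    (∃ C₁ C₂ : Finset α, C₁ ∪ C₂ = C ∧ C₁ ∩ C₂ = ∅ ∧ p ∉ E (E C₁ ∪ E C₂)) ↔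
      LosesSubelection E C p := by
  constructor
  · rintro ⟨C₁, C₂, rfl, -, h⟩
    exact losesSubelection_of_runoffPartition hE hp h
  · rintro ⟨D, hDC, hpD, hpED⟩
    refine ⟨D, C \ D, union_sdiff_of_subset hDC, inter_sdiff_self D C, fun hwin => ?_⟩
    exact notMem_union_sdiff hpD hpED (union_subset_union subset_rfl (hE _) (hE _ hwin))

theorem exists_partition_iff_losesSubelection (hp : p ∈ C) :
    (∃ C₁ C₂ : Finset α, C₁ ∪ C₂ = C ∧ C₁ ∩ C₂ = ∅ ∧ p ∉ E (E C₁ ∪ C₂)) ↔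
      LosesSubelection E C p := by
  constructor
  · rintro ⟨C₁, C₂, rfl, -, h⟩
    exact losesSubelection_of_partition hE hp h
  · rintro ⟨D, hDC, hpD, hpED⟩
    exact ⟨D, C \ D, union_sdiff_of_subset hDC, inter_sdiff_self D C,
      fun hwin => notMem_union_sdiff hpD hpED (hE _ hwin)⟩

end

end DestructiveControl

/-- for any election system `E` (mapping each candidate subset,
with the fixed votes, to a winner subset), the decision problems
`E`-DC-RPC-TP-NUW and `E`-DC-PC-TP-NUW are equal as sets: there is a partition
`(C₁,C₂)` of `C` with `p` not a winner of the two-stage RPC-TP election, i.e.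
`p ∉ E (E C₁ ∪ E C₂)` (note that if `p` is eliminated in the first round then
`p` is not in the final candidate set, hence not a winner of the final round),
iff there is a partition with `p` not a winner of the two-stage PC-TP election,
i.e. `p ∉ E (E C₁ ∪ C₂)`. -/
theorem dc_rpc_tp_nuw_eq_dc_pc_tp_nuw {α : Type*} [DecidableEq α]
    (E : Finset α → Finset α) (hE : ∀ C' : Finset α, E C' ⊆ C')
    (C : Finset α) (p : α) (hp : p ∈ C) :
    (∃ C₁ C₂ : Finset α, C₁ ∪ C₂ = C ∧ C₁ ∩ C₂ = ∅ ∧ p ∉ E (E C₁ ∪ E C₂)) ↔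
    (∃ C₁ C₂ : Finset α, C₁ ∪ C₂ = C ∧ C₁ ∩ C₂ = ∅ ∧ p ∉ E (E C₁ ∪ C₂)) :=
  (DestructiveControl.exists_runoffPartition_iff_losesSubelection hE hp).trans
    (DestructiveControl.exists_partition_iff_losesSubelection hE hp).symm
end

section
/- For any election system E, if p witnesses successful destructive control via run-off partition of candidates with ties-promote (RPC-TP-NUW) on (C,V,p) by partition (C₁,C₂), then letting C' be the candidate set of the election in which p participated and lost (one of (C₁,V), (C₂,V), or the final round), the partition (C', C∖C') is a successful solution to destructive control by partition of candidates with ties-promote (PC-TP-NUW) on (C,V,p), since in the PC-TP process under this partition p participates in and loses the first-round election (C',V). -/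
open Finset

theorem notMem_final_of_notMem_first_round {α : Type*} [DecidableEq α]
    {E : Finset α → Finset α} (hE : ∀ s, E s ⊆ s) {A B : Finset α} {p : α}
    (hpA : p ∈ A) (hlost : p ∉ E A) : p ∉ E (E A ∪ (B \ A)) := fun hwin =>
  (mem_union.mp (hE _ hwin)).elim hlost fun hpB => (mem_sdiff.mp hpB).2 hpA

theorem rpc_tp_to_pc_tp_solution_general {α : Type*} [DecidableEq α]
    (E : Finset α → Finset α) (hE : ∀ C' : Finset α, E C' ⊆ C')
    (C C₁ C₂ C' : Finset α) (p : α)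
    (hcup : C₁ ∪ C₂ = C)
    (hC' : C' = C₁ ∨ C' = C₂ ∨ C' = E C₁ ∪ E C₂)
    (hpart : p ∈ C') (hlost : p ∉ E C') :
    C' ⊆ C ∧ p ∉ E (E C' ∪ (C \ C')) := by
  refine ⟨?_, notMem_final_of_notMem_first_round hE hpart hlost⟩
  subst hcup
  rcases hC' with rfl | rfl | rfl
  · exact subset_union_left
  · exact subset_union_right
  · exact union_subset_union (hE C₁) (hE C₂)

/-- for any election system `E`, if the partition `(C₁,C₂)` is a
successful DC-RPC-TP-NUW solution on `(C,V,p)` and `C'` is the candidate set of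
the election of the RPC-TP process in which `p` participated and lost (one of
`(C₁,V)`, `(C₂,V)`, or the final round on `E C₁ ∪ E C₂`), then `(C', C \ C')` is
a successful DC-PC-TP-NUW solution: `p` participates in and loses the first-round
election `(C',V)` and hence is not a winner of the two-stage PC-TP process. -/
theorem rpc_tp_to_pc_tp_solution {α : Type*} [DecidableEq α]
    (E : Finset α → Finset α) (hE : ∀ C' : Finset α, E C' ⊆ C')
    (C C₁ C₂ C' : Finset α) (p : α) (hp : p ∈ C)
    (hcup : C₁ ∪ C₂ = C) (hdisj : C₁ ∩ C₂ = ∅)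
    (hsucc : p ∉ E (E C₁ ∪ E C₂))
    (hC' : C' = C₁ ∨ C' = C₂ ∨ C' = E C₁ ∪ E C₂)
    (hpart : p ∈ C') (hlost : p ∉ E C') :
    C' ⊆ C ∧ p ∉ E (E C' ∪ (C \ C')) :=
  rpc_tp_to_pc_tp_solution_general E hE C C₁ C₂ C' p hcup hC' hpart hlost
end

section
/- For every election system E satisfying Property Unique-α, the set E-DC-PC-TE-UW equals B_E = {(C,V,p) : p ∈ C and p is not the unique winner of the E election (C,V)}; moreover, for each (C,V,p) ∈ B_E, the partition (∅, C) is a successful solution. -/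
/-- Ties-eliminate survivor set for election system `E`: the winner set of `C'`
if it has exactly one element, else the empty set. -/
def uwIfAny {α : Type*} (E : Finset α → Finset α) (C' : Finset α) : Finset α :=
  if (E C').card = 1 then E C' else ∅

/-! If `p` is the unique winner of `C`, then under Unique-α it is the unique winner of every
subelection containing it; in particular it wins its first-round subelection whenever it is
placed there, so in every partition `p` reaches a final round whose candidates lie in `C`,
and wins it. Conversely, if `p` is not the unique winner of `C`, the partition `(∅, C)` has
final round `(C, V)` itself. -/

namespace Election

variable {α : Type*} (E : Finset α → Finset α)

def UniqueAlpha : Prop :=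
  ∀ (C C' : Finset α) (p : α), E C = {p} → p ∈ C' → C' ⊆ C → E C' = {p}

variable {E}

theorem uwIfAny_subset (hE : ∀ C' : Finset α, E C' ⊆ C') (C' : Finset α) :
    uwIfAny E C' ⊆ C' := by
  unfold uwIfAny
  split
  · exact hE C'
  · exact Finset.empty_subset C'

theorem uwIfAny_empty (hE : ∀ C' : Finset α, E C' ⊆ C') : uwIfAny E ∅ = ∅ :=
  Finset.subset_empty.mp (uwIfAny_subset hE ∅)

theorem uwIfAny_eq_singleton {C' : Finset α} {p : α} (h : E C' = {p}) :
    uwIfAny E C' = {p} := by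
  simp [uwIfAny, h]

theorem final_eq_singleton_of_eq_singleton [DecidableEq α]
    (hE : ∀ C' : Finset α, E C' ⊆ C') (hα : UniqueAlpha E)
    {C C₁ C₂ : Finset α} {p : α} (hC : E C = {p}) (hun : C₁ ∪ C₂ = C) :
    E (uwIfAny E C₁ ∪ C₂) = {p} := by
  subst hun
  have hp : p ∈ C₁ ∪ C₂ := hE _ (hC ▸ Finset.mem_singleton_self p)
  have hsub : uwIfAny E C₁ ∪ C₂ ⊆ C₁ ∪ C₂ :=
    Finset.union_subset_union (uwIfAny_subset hE C₁) subset_rfl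
  have hp_final : p ∈ uwIfAny E C₁ ∪ C₂ := by
    rcases Finset.mem_union.mp hp with hp₁ | hp₂
    · have hwin₁ : E C₁ = {p} := hα _ C₁ p hC hp₁ Finset.subset_union_left
      simp [uwIfAny_eq_singleton hwin₁]
    · exact Finset.mem_union_right _ hp₂
  exact hα _ _ p hC hp_final hsub

end Election

open Election in
theorem dc_pc_te_uw_eq_B_general {α : Type*} [DecidableEq α]
    (E : Finset α → Finset α) (hE : ∀ C' : Finset α, E C' ⊆ C')
    (hα : ∀ (C C' : Finset α) (p : α), E C = {p} → p ∈ C' → C' ⊆ C → E C' = {p})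
    (C : Finset α) (p : α) :
    ((∃ C₁ C₂ : Finset α, C₁ ∪ C₂ = C ∧ C₁ ∩ C₂ = ∅ ∧
        E (uwIfAny E C₁ ∪ C₂) ≠ {p}) ↔ E C ≠ {p}) ∧
    (E C ≠ {p} → E (uwIfAny E (∅ : Finset α) ∪ C) ≠ {p}) := by
  have hsplit_empty : E C ≠ {p} → E (uwIfAny E (∅ : Finset α) ∪ C) ≠ {p} := by
    rw [uwIfAny_empty hE, Finset.empty_union]
    exact id
  refine ⟨⟨?_, fun h => ⟨∅, C, Finset.empty_union C, Finset.empty_inter C, hsplit_empty h⟩⟩,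
    hsplit_empty⟩
  rintro ⟨C₁, C₂, hun, -, hne⟩ hC
  exact hne (final_eq_singleton_of_eq_singleton hE hα hC hun)

/-- for every election system `E` satisfying Property Unique-α
(with `E ∅ = ∅`), the set `E`-DC-PC-TE-UW equals
`B_E = {(C,V,p) : p ∈ C and p is not the unique winner of (C,V)}`; moreover for
each member of `B_E` the partition `(∅, C)` is a successful solution.  Success of
partition `(C₁,C₂)` means `p` is not the unique winner of the two-stage process,
i.e. the winner set of the final round `(uwIfAny E C₁ ∪ C₂, V)` is not `{p}`
(note `p` being eliminated in round one also yields this, since then `p` is not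
in the final candidate set). -/
theorem dc_pc_te_uw_eq_B {α : Type*} [DecidableEq α]
    (E : Finset α → Finset α) (hE : ∀ C' : Finset α, E C' ⊆ C')
    (hα : ∀ (C C' : Finset α) (p : α), E C = {p} → p ∈ C' → C' ⊆ C → E C' = {p})
    (hempty : E ∅ = ∅)
    (C : Finset α) (p : α) (hp : p ∈ C) :
    ((∃ C₁ C₂ : Finset α, C₁ ∪ C₂ = C ∧ C₁ ∩ C₂ = ∅ ∧
        E (uwIfAny E C₁ ∪ C₂) ≠ {p}) ↔ E C ≠ {p}) ∧
    (E C ≠ {p} → E (uwIfAny E (∅ : Finset α) ∪ C) ≠ {p}) :=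
  dc_pc_te_uw_eq_B_general E hE hα C p
end

section
/- For every election system E, on any instance (C,V,p) with p ∈ C, if the partition (C₁,C₂) is a successful solution to E-DC-PC-TE-NUW, then exactly one of the following holds: (a) p ∈ C₁ and p is not the unique winner of (C₁,V), or (b) p ∈ UniqueWinnerIfAny_E(C₁,V) ∪ C₂ and p is not a winner of the final-round election (UniqueWinnerIfAny_E(C₁,V) ∪ C₂, V); and in either case, letting D be the candidate set of the election in which p participated and lost (D = C₁ in case (a), D = UniqueWinnerIfAny_E(C₁,V) ∪ C₂ in case (b)), the partition (D, C∖D) is a successful solution to E-DC-RPC-TE-NUW on (C,V,p). -/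
section uwIfAny

variable {α : Type*} (E : Finset α → Finset α)

theorem mem_uwIfAny_iff {S : Finset α} {p : α} : p ∈ uwIfAny E S ↔ E S = {p} := by
  unfold uwIfAny
  split_ifs with h
  · obtain ⟨a, ha⟩ := Finset.card_eq_one.mp h
    simp [ha, eq_comm]
  · simp only [Finset.notMem_empty, false_iff]
    intro hsingle
    exact h (by rw [hsingle, Finset.card_singleton])

theorem uwIfAny_subset (S : Finset α) : uwIfAny E S ⊆ E S := by
  unfold uwIfAny
  split_ifs
  exacts [subset_rfl, Finset.empty_subset _]

theorem notMem_uwIfAny_union_iff [DecidableEq α] {C₁ C₂ : Finset α} {p : α}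
    (hp : p ∈ C₁ ∪ C₂) (hdisj : Disjoint C₁ C₂) :
    p ∉ uwIfAny E C₁ ∪ C₂ ↔ p ∈ C₁ ∧ E C₁ ≠ {p} := by
  rw [Finset.mem_union, mem_uwIfAny_iff]
  rcases Finset.mem_union.mp hp with hp₁ | hp₂
  · simp [hp₁, Finset.disjoint_left.mp hdisj hp₁]
  · simp [hp₂, Finset.disjoint_right.mp hdisj hp₂]

theorem notMem_runoff_of_ne_singleton [DecidableEq α] (hE : ∀ S, E S ⊆ S)
    {C D : Finset α} {p : α} (hpD : p ∈ D) (hne : E D ≠ {p}) :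
    p ∉ E (uwIfAny E D ∪ uwIfAny E (C \ D)) := by
  intro hwin
  rcases Finset.mem_union.mp (hE _ hwin) with hD | hrest
  · exact hne ((mem_uwIfAny_iff E).mp hD)
  · exact (Finset.mem_sdiff.mp (hE _ (uwIfAny_subset E _ hrest))).2 hpD

end uwIfAny

/-- for every election system `E`, if `(C₁,C₂)` is a successful
DC-PC-TE-NUW solution on `(C,V,p)` (i.e. `p` is not a winner of the two-stage
process whose final round is on `uwIfAny E C₁ ∪ C₂`), then exactly one of:
(a) `p ∈ C₁` and `p` is not the unique winner of `(C₁,V)`; or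
(b) `p` participates in and is not a winner of the final round.
Moreover, letting `D` be the candidate set of the election in which `p`
participated and lost (`D = C₁` in case (a), `D = uwIfAny E C₁ ∪ C₂` in case
(b)), the partition `(D, C \ D)` is a successful DC-RPC-TE-NUW solution on
`(C,V,p)`. -/
theorem dc_pc_te_nuw_to_dc_rpc_te_nuw {α : Type*} [DecidableEq α]
    (E : Finset α → Finset α) (hE : ∀ C' : Finset α, E C' ⊆ C')
    (C C₁ C₂ : Finset α) (p : α) (hp : p ∈ C)
    (hcup : C₁ ∪ C₂ = C) (hdisj : C₁ ∩ C₂ = ∅)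
    (hsucc : p ∉ E (uwIfAny E C₁ ∪ C₂)) :
    Xor' (p ∈ C₁ ∧ E C₁ ≠ {p})
         (p ∈ uwIfAny E C₁ ∪ C₂ ∧ p ∉ E (uwIfAny E C₁ ∪ C₂)) ∧
    ((p ∈ C₁ ∧ E C₁ ≠ {p}) →
      p ∉ E (uwIfAny E C₁ ∪ uwIfAny E (C \ C₁))) ∧
    ((p ∈ uwIfAny E C₁ ∪ C₂ ∧ p ∉ E (uwIfAny E C₁ ∪ C₂)) →
      p ∉ E (uwIfAny E (uwIfAny E C₁ ∪ C₂) ∪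
             uwIfAny E (C \ (uwIfAny E C₁ ∪ C₂)))) := by
  have hfirst := notMem_uwIfAny_union_iff E (hcup ▸ hp)
    (Finset.disjoint_iff_inter_eq_empty.mpr hdisj)
  refine ⟨?_, fun ha => notMem_runoff_of_ne_singleton E hE ha.1 ha.2,
    fun hb => notMem_runoff_of_ne_singleton E hE hb.1 ?_⟩
  · rw [← hfirst]
    unfold Xor'
    tauto
  · intro hsingle
    exact hb.2 (hsingle ▸ Finset.mem_singleton_self p)
end
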